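/- arXiv:2007.02876 — 3 statements merged into one kernel-verified Lean document; each statement's English description precedes it below -/
import Mathlib

section
/- Let E ⊆ ℝ^d, let λ be a measure supported on E, let F : E → ℝ^l be measurable, and let 𝓕 = {ν_θ(dx) = exp(⟨θ, F(x)⟩ − A(θ)) λ(dx) : θ ∈ ℝ^{l}} be the natural exponential family with sufficient statistic F and base measure λ (A(θ) the log-partition function, assumed finite for the relevant θ). Let μ be a probability measure on E that is mutually absolutely continuous with every ν_θ ∈ 𝓕, and suppose θ_M ∈ ℝ^l satisfies ∫ F dν_{θ_M} = ∫ F dμ. Then for every θ ∈ ℝ^l, KL(μ‖ν_{θ_M}) − KL(μ‖ν_θ) = −KL(ν_{θ_M}‖ν_θ) ≤ 0; in particular ν_{θ_M} = argmin_{ν ∈ 𝓕} KL(μ‖ν). -/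
/-!
The family `ν θ` is the family of exponential tilts `lam.tilted (θ ⬝ᵥ F)`, so every member is a
tilt of `ν θM`: `ν θ = (ν θM).tilted ((θ - θM) ⬝ᵥ F)`. Tilting `ρ` by `f` changes `KL(· ‖ ρ)` by
`-∫ f + log ∫ exp f dρ`, an amount that depends on the first argument only through `∫ f`. The
moment condition makes this integral the same under `μ` and under `ν θM`, which yields the
Pythagorean identity `KL(μ‖ν θ) = KL(μ‖ν θM) + KL(ν θM‖ν θ)`; Gibbs' inequality finishes.
-/

open MeasureTheory Filter
open scoped NNReal ENNReal

noncomputable section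

/-- ℓ¹ distance on `ℝ^d`. -/
def l1dist {d : ℕ} (x y : Fin d → ℝ) : ℝ := ∑ i, |x i - y i|

/-- The set of couplings of two measures. -/
def couplings {α : Type*} [MeasurableSpace α] (μ ν : Measure α) : Set (Measure (α × α)) :=
  {π | IsProbabilityMeasure π ∧ π.map Prod.fst = μ ∧ π.map Prod.snd = ν}

/-- Optimal transport cost with ground cost `c`. -/
def Wcost {α : Type*} [MeasurableSpace α] (c : α → α → ℝ) (μ ν : Measure α) : ℝ :=
  sInf ((fun π : Measure (α × α) => ∫ p, c p.1 p.2 ∂π) '' couplings μ ν)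

/-- 1-Wasserstein distance on `ℝ^d` with ℓ¹ ground cost. -/
def W1 {d : ℕ} (μ ν : Measure (Fin d → ℝ)) : ℝ := Wcost l1dist μ ν

/-- Boltzmann–Gibbs transformation `Ψ_g(ν)(dx) = g(x) ν(dx) / ν(g)`. -/
def BG {d : ℕ} (g : (Fin d → ℝ) → ℝ) (ν : Measure (Fin d → ℝ)) : Measure (Fin d → ℝ) :=
  ν.withDensity (fun x => ENNReal.ofReal (g x / ∫ y, g y ∂ν))

/-- Real-valued Kullback–Leibler divergence `∫ log(dμ/dν) dμ`
(the generalized entropy of the paper is `H_ν(μ) = -KL μ ν`). -/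
def KL {α : Type*} [MeasurableSpace α] (μ ν : Measure α) : ℝ :=
  ∫ x, Real.log ((μ.rnDeriv ν x).toReal) ∂μ

/-- Convolution of two measures on `ℝ^d`. -/
def mconv {d : ℕ} (μ ν : Measure (Fin d → ℝ)) : Measure (Fin d → ℝ) :=
  (μ.prod ν).map (fun p => p.1 + p.2)

/-- Empirical measure of a finite family of points. -/
def empMeasure {d N : ℕ} (x : Fin N → (Fin d → ℝ)) : Measure (Fin d → ℝ) :=
  (N : ℝ≥0∞)⁻¹ • ∑ i, Measure.dirac (x i)

namespace MeasureTheory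

variable {α : Type*} {mα : MeasurableSpace α} {μ ρ : Measure α} {f : α → ℝ}

lemma KL_eq_integral_llr (μ ν : Measure α) : KL μ ν = ∫ x, llr μ ν x ∂μ := rfl

lemma integral_llr_nonneg [IsProbabilityMeasure μ] [IsProbabilityMeasure ρ]
    (hμρ : μ ≪ ρ) (h_int : Integrable (llr μ ρ) μ) : 0 ≤ ∫ x, llr μ ρ x ∂μ := by
  simpa using InformationTheory.integral_llr_add_sub_measure_univ_nonneg hμρ h_int

lemma KL_tilted_right_nonneg [IsProbabilityMeasure ρ] (hfρ : Integrable f ρ)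
    (hexp : Integrable (fun x ↦ Real.exp (f x)) ρ) : 0 ≤ KL ρ (ρ.tilted f) := by
  have : IsProbabilityMeasure (ρ.tilted f) := isProbabilityMeasure_tilted hexp
  have hself : Integrable (llr ρ ρ) ρ := (integrable_zero _ _ _).congr (llr_self ρ).symm
  exact integral_llr_nonneg (absolutelyContinuous_tilted hexp)
    (integrable_llr_tilted_right (Measure.AbsolutelyContinuous.refl ρ) hfρ hself hexp)

lemma KL_sub_KL_tilted_right [IsProbabilityMeasure μ] [IsProbabilityMeasure ρ]
    (hμρ : μ ≪ ρ) (hllr : Integrable (llr μ ρ) μ) (hfμ : Integrable f μ) (hfρ : Integrable f ρ)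
    (hexp : Integrable (fun x ↦ Real.exp (f x)) ρ) (hmoment : ∫ x, f x ∂μ = ∫ x, f x ∂ρ) :
    KL μ ρ - KL μ (ρ.tilted f) = -KL ρ (ρ.tilted f) := by
  have hself : Integrable (llr ρ ρ) ρ := (integrable_zero _ _ _).congr (llr_self ρ).symm
  simp only [KL_eq_integral_llr]
  rw [integral_llr_tilted_right hμρ hfμ hexp hllr,
    integral_llr_tilted_right (Measure.AbsolutelyContinuous.refl ρ) hfρ hexp hself,
    integral_congr_ae (llr_self ρ), hmoment]
  simp only [Pi.zero_apply, integral_zero]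
  ring

lemma withDensity_exp_sub_log_integral_eq_tilted {g : α → ℝ}
    (hpos : 0 < ∫ x, Real.exp (g x) ∂μ) :
    μ.withDensity (fun x ↦ ENNReal.ofReal (Real.exp (g x - Real.log (∫ y, Real.exp (g y) ∂μ))))
      = μ.tilted g := by
  simp_rw [Real.exp_sub, Real.exp_log hpos]
  rfl

section DotProduct

variable {ι : Type*} [Fintype ι] {F : α → ι → ℝ}

lemma Integrable.dotProduct (θ : ι → ℝ) (hF : Integrable F μ) :
    Integrable (fun x ↦ θ ⬝ᵥ F x) μ :=
  integrable_finsetSum _ fun i _ ↦ (hF.eval i).const_mul _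

lemma integral_dotProduct (θ : ι → ℝ) (hF : Integrable F μ) :
    ∫ x, θ ⬝ᵥ F x ∂μ = θ ⬝ᵥ ∫ x, F x ∂μ := by
  simp only [dotProduct]
  rw [integral_finsetSum _ fun i _ ↦ (hF.eval i).const_mul _]
  simp_rw [integral_const_mul, eval_integral hF.eval]

end DotProduct

end MeasureTheory

theorem statement2_general {d l : ℕ}
    (lam : Measure (Fin d → ℝ))
    (F : (Fin d → ℝ) → (Fin l → ℝ))
    (hZpos : ∀ θ : Fin l → ℝ, 0 < ∫ x, Real.exp (∑ i, θ i * F x i) ∂lam)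
    (hZint : ∀ θ : Fin l → ℝ, Integrable (fun x => Real.exp (∑ i, θ i * F x i)) lam)
    (A : (Fin l → ℝ) → ℝ)
    (hA : ∀ θ, A θ = Real.log (∫ x, Real.exp (∑ i, θ i * F x i) ∂lam))
    (ν : (Fin l → ℝ) → Measure (Fin d → ℝ))
    (hν : ∀ θ, ν θ =
      lam.withDensity (fun x => ENNReal.ofReal (Real.exp ((∑ i, θ i * F x i) - A θ))))
    (hνProb : ∀ θ, IsProbabilityMeasure (ν θ))
    (μ : Measure (Fin d → ℝ)) [IsProbabilityMeasure μ]
    (hAC : ∀ θ, μ ≪ ν θ ∧ ν θ ≪ μ)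
    (hFμ : Integrable F μ) (hFν : ∀ θ, Integrable F (ν θ))
    (hKLfin : ∀ θ, Integrable (fun x => Real.log ((μ.rnDeriv (ν θ) x).toReal)) μ)
    (θM : Fin l → ℝ) (hθM : (∫ x, F x ∂(ν θM)) = ∫ x, F x ∂μ) :
    ∀ θ, KL μ (ν θM) - KL μ (ν θ) = -(KL (ν θM) (ν θ))
      ∧ KL μ (ν θM) - KL μ (ν θ) ≤ 0
      ∧ KL μ (ν θM) ≤ KL μ (ν θ) := by
  intro θ
  have hZint' (t : Fin l → ℝ) : Integrable (fun x ↦ Real.exp (t ⬝ᵥ F x)) lam := hZint t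
  have hνtilted (t : Fin l → ℝ) : ν t = lam.tilted (fun x ↦ t ⬝ᵥ F x) := by
    rw [hν, hA]
    exact withDensity_exp_sub_log_integral_eq_tilted (hZpos t)
  have hνθ : ν θ = (ν θM).tilted (fun x ↦ (θ - θM) ⬝ᵥ F x) := by
    rw [hνtilted θ, hνtilted θM, tilted_tilted (hZint' θM)]
    congr with x
    simp only [Pi.add_apply, sub_dotProduct, add_sub_cancel]
  have hexp : Integrable (fun x ↦ Real.exp ((θ - θM) ⬝ᵥ F x)) (ν θM) := by
    rw [hνtilted θM, integrable_tilted_iff (hZint' θM)]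
    refine (hZint' θ).congr (.of_forall fun x ↦ ?_)
    simp only [smul_eq_mul, ← Real.exp_add, sub_dotProduct, add_sub_cancel]
  have hmoment : ∫ x, (θ - θM) ⬝ᵥ F x ∂μ = ∫ x, (θ - θM) ⬝ᵥ F x ∂(ν θM) := by
    rw [integral_dotProduct _ hFμ, integral_dotProduct _ (hFν θM), hθM]
  have := hνProb θM
  have hKL := KL_sub_KL_tilted_right (hAC θM).1 (hKLfin θM) (hFμ.dotProduct _)
    ((hFν θM).dotProduct _) hexp hmoment
  have hgibbs := KL_tilted_right_nonneg ((hFν θM).dotProduct (θ - θM)) hexp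
  rw [hνθ]
  exact ⟨hKL, by linarith, by linarith⟩

/-- moment projection onto a natural exponential family:
if `∫ F dν_{θM} = ∫ F dμ` then for every `θ`,
`KL(μ‖ν_{θM}) − KL(μ‖ν_θ) = −KL(ν_{θM}‖ν_θ) ≤ 0`, so `ν_{θM}` minimizes `KL(μ‖·)` over the family. -/
theorem statement2 {d l : ℕ} (E : Set (Fin d → ℝ))
    (lam : Measure (Fin d → ℝ)) (hlamE : lam Eᶜ = 0)
    (F : (Fin d → ℝ) → (Fin l → ℝ)) (hF : Measurable F)
    (hZpos : ∀ θ : Fin l → ℝ, 0 < ∫ x, Real.exp (∑ i, θ i * F x i) ∂lam)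
    (hZint : ∀ θ : Fin l → ℝ, Integrable (fun x => Real.exp (∑ i, θ i * F x i)) lam)
    (A : (Fin l → ℝ) → ℝ)
    (hA : ∀ θ, A θ = Real.log (∫ x, Real.exp (∑ i, θ i * F x i) ∂lam))
    (ν : (Fin l → ℝ) → Measure (Fin d → ℝ))
    (hν : ∀ θ, ν θ =
      lam.withDensity (fun x => ENNReal.ofReal (Real.exp ((∑ i, θ i * F x i) - A θ))))
    (hνProb : ∀ θ, IsProbabilityMeasure (ν θ))
    (μ : Measure (Fin d → ℝ)) [IsProbabilityMeasure μ]
    (hAC : ∀ θ, μ ≪ ν θ ∧ ν θ ≪ μ)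
    (hFμ : Integrable F μ) (hFν : ∀ θ, Integrable F (ν θ))
    (hKLfin : ∀ θ, Integrable (fun x => Real.log ((μ.rnDeriv (ν θ) x).toReal)) μ)
    (θM : Fin l → ℝ) (hθM : (∫ x, F x ∂(ν θM)) = ∫ x, F x ∂μ) :
    ∀ θ, KL μ (ν θM) - KL μ (ν θ) = -(KL (ν θM) (ν θ))
      ∧ KL μ (ν θM) - KL μ (ν θ) ≤ 0
      ∧ KL μ (ν θM) ≤ KL μ (ν θ) :=
  statement2_general lam F hZpos hZint A hA ν hν hνProb μ hAC hFμ hFν hKLfin θM hθM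
end
end

section
/- Let E ⊂ ℝ^d be compact and convex, let μ be a probability measure on E with finite first moment, and let G : E × E → ℝ be a measurable interaction potential with G(x,y) ≥ ε(G) > 0 for all x,y, and ‖G‖_{Lip,∞} := sup_{y∈E} ‖G(·,y)‖_Lip < ∞. Then for all x, y ∈ E: W₁(Ψ_{G(x,·)}(μ), Ψ_{G(y,·)}(μ)) ≤ (2 ‖G‖_{Lip,∞} diam(E) / ε(G)) · ‖x − y‖₁. -/
/-!
Write the two Boltzmann–Gibbs measures as `φ μ` and `ψ μ`. Leaving the common part
`min φ ψ · μ` in place and transporting the two remainders independently gives a coupling in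
which only the remainder mass `∫ (φ - ψ)⁺ dμ` moves, each unit by at most `diam E`. The
normalising constants are at least `ε` and differ by at most `‖G‖_{Lip,∞} ‖x - y‖₁`, so
`|φ - ψ| ≤ (‖G‖_{Lip,∞} ‖x - y‖₁ / ε) (1 + ψ)`, whose integral is twice that prefactor.
-/

open MeasureTheory Filter
open scoped NNReal ENNReal

noncomputable section

open Set

section L1dist

variable {d : ℕ}

lemma l1dist_nonneg (x y : Fin d → ℝ) : 0 ≤ l1dist x y :=
  Finset.sum_nonneg fun _ _ => abs_nonneg _

@[simp] lemma l1dist_self (x : Fin d → ℝ) : l1dist x x = 0 := by simp [l1dist]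

lemma continuous_l1dist : Continuous fun p : (Fin d → ℝ) × (Fin d → ℝ) => l1dist p.1 p.2 := by
  unfold l1dist
  fun_prop

end L1dist

namespace MeasureTheory.Measure

variable {α : Type*} [MeasurableSpace α] {P Q : Measure α} [IsFiniteMeasure Q]

lemma inv_smul_prod_apply_univ (h : P univ = Q univ) : ((Q univ)⁻¹ • P.prod Q) univ = P univ := by
  by_cases hQ : Q univ = 0
  · simp [measure_univ_eq_zero.1 (h.trans hQ)]
  · rw [smul_apply, ← univ_prod_univ, prod_prod, smul_eq_mul, mul_comm (P univ),
      ← mul_assoc, ENNReal.inv_mul_cancel hQ (measure_ne_top Q univ), one_mul]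

lemma map_fst_inv_smul_prod (h : P univ = Q univ) : ((Q univ)⁻¹ • P.prod Q).map Prod.fst = P := by
  by_cases hQ : Q univ = 0
  · simp [measure_univ_eq_zero.1 (h.trans hQ)]
  · rw [Measure.map_smul, map_fst_prod, smul_smul,
      ENNReal.inv_mul_cancel hQ (measure_ne_top Q univ), one_smul]

lemma map_snd_inv_smul_prod (h : P univ = Q univ) : ((Q univ)⁻¹ • P.prod Q).map Prod.snd = Q := by
  by_cases hQ : Q univ = 0
  · simp [measure_univ_eq_zero.1 hQ]
  · rw [Measure.map_smul, map_snd_prod, h, smul_smul,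
      ENNReal.inv_mul_cancel hQ (measure_ne_top Q univ), one_smul]

end MeasureTheory.Measure

section Wcost

variable {α : Type*} [MeasurableSpace α] {c : α → α → ℝ}

lemma Wcost_le_integral (hc : ∀ x y, 0 ≤ c x y) {μ ν : Measure α} {π : Measure (α × α)}
    (hπ : π ∈ couplings μ ν) : Wcost c μ ν ≤ ∫ p, c p.1 p.2 ∂π :=
  csInf_le ⟨0, by rintro _ ⟨π', -, rfl⟩; exact integral_nonneg fun p => hc p.1 p.2⟩ ⟨π, hπ, rfl⟩

theorem Wcost_add_le (hc : ∀ x y, 0 ≤ c x y) (hc_meas : Measurable fun p : α × α => c p.1 p.2)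
    (hc_diag : ∀ x, c x x = 0) {E : Set α} {D : ℝ} (hD : ∀ x ∈ E, ∀ y ∈ E, c x y ≤ D)
    (ν P Q : Measure α) [IsFiniteMeasure ν] [IsFiniteMeasure P] [IsFiniteMeasure Q]
    [IsProbabilityMeasure (ν + P)] [IsProbabilityMeasure (ν + Q)]
    (hP : P Eᶜ = 0) (hQ : Q Eᶜ = 0) :
    Wcost c (ν + P) (ν + Q) ≤ D * P.real univ := by
  have hmass : P univ = Q univ := by
    have h : ν univ + P univ = ν univ + Q univ := by
      rw [← Measure.add_apply, ← Measure.add_apply, measure_univ, measure_univ]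
    exact (ENNReal.add_right_inj (measure_ne_top ν univ)).1 h
  have hdiag : Measurable fun u : α => (u, u) := measurable_id.prodMk measurable_id
  set ρ := (Q univ)⁻¹ • P.prod Q
  have hρ_univ : ρ univ = P univ := Measure.inv_smul_prod_apply_univ hmass
  have : IsFiniteMeasure ρ := ⟨by rw [hρ_univ]; exact measure_lt_top P univ⟩
  have hfst : (ν.map (fun u => (u, u)) + ρ).map Prod.fst = ν + P := by
    rw [Measure.map_add _ _ measurable_fst, Measure.map_map measurable_fst hdiag,
      Measure.map_fst_inv_smul_prod hmass]
    simp only [Function.comp_def, Measure.map_id']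
  have hsnd : (ν.map (fun u => (u, u)) + ρ).map Prod.snd = ν + Q := by
    rw [Measure.map_add _ _ measurable_snd, Measure.map_map measurable_snd hdiag,
      Measure.map_snd_inv_smul_prod hmass]
    simp only [Function.comp_def, Measure.map_id']
  have hprob : IsProbabilityMeasure (ν.map (fun u => (u, u)) + ρ) := by
    rw [← Measure.isProbabilityMeasure_map_iff measurable_fst.aemeasurable, hfst]
    infer_instance
  have hc_ρ : ∀ᵐ p ∂ρ, c p.1 p.2 ≤ D := by
    have hPQ : ∀ᵐ p ∂(P.prod Q), p ∈ E ×ˢ E := by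
      rw [ae_iff, ← compl_def, compl_prod_eq_union]
      exact measure_union_null (by rw [Measure.prod_prod, hP, zero_mul])
        (by rw [Measure.prod_prod, hQ, mul_zero])
    filter_upwards [Measure.ae_smul_measure hPQ _] with p hp using hD _ hp.1 _ hp.2
  have hc_norm_ρ : ∀ᵐ p ∂ρ, ‖c p.1 p.2‖ ≤ D := by
    filter_upwards [hc_ρ] with p hp
    rwa [Real.norm_of_nonneg (hc _ _)]
  have hc_diag_int : Integrable (fun p : α × α => c p.1 p.2) (ν.map fun u => (u, u)) := by
    rw [integrable_map_measure hc_meas.aestronglyMeasurable hdiag.aemeasurable]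
    simp [Function.comp_def, hc_diag]
  calc Wcost c (ν + P) (ν + Q) ≤ ∫ p, c p.1 p.2 ∂(ν.map (fun u => (u, u)) + ρ) :=
        Wcost_le_integral hc ⟨hprob, hfst, hsnd⟩
    _ = ∫ p, c p.1 p.2 ∂ρ := by
        rw [integral_add_measure hc_diag_int
          (Integrable.of_bound hc_meas.aestronglyMeasurable D hc_norm_ρ),
          integral_map hdiag.aemeasurable hc_meas.aestronglyMeasurable]
        simp [hc_diag]
    _ ≤ D * ρ.real univ := le_of_abs_le (norm_integral_le_of_norm_le_const hc_norm_ρ)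
    _ = D * P.real univ := by rw [measureReal_def, hρ_univ, measureReal_def]

end Wcost

lemma abs_div_sub_div_le {p q a b ε K : ℝ} (hε : 0 < ε) (ha : ε ≤ a) (hb : ε ≤ b) (hq : 0 ≤ q)
    (hpq : |p - q| ≤ K) (hab : |a - b| ≤ K) : |p / a - q / b| ≤ K / ε * (1 + q / b) := by
  have ha0 : 0 < a := hε.trans_le ha
  have hb0 : 0 < b := hε.trans_le hb
  have hK : 0 ≤ K := (abs_nonneg _).trans hpq
  have hsplit : p / a - q / b = (p - q) / a + q / b * ((b - a) / a) := by
    field_simp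
    ring
  calc |p / a - q / b| ≤ |p - q| / a + q / b * (|a - b| / a) := by
        rw [hsplit, abs_sub_comm a b]
        refine (abs_add_le _ _).trans_eq ?_
        rw [abs_div, abs_mul, abs_div, abs_div, abs_of_pos ha0, abs_of_pos hb0, abs_of_nonneg hq]
    _ ≤ K / ε + q / b * (K / ε) := by gcongr
    _ = K / ε * (1 + q / b) := by ring

section Densities

variable {α : Type*} [MeasurableSpace α] {μ : Measure α} {f g : α → ℝ}

lemma withDensity_ofReal_eq_min_add (hf0 : 0 ≤ᵐ[μ] f) (hg0 : 0 ≤ᵐ[μ] g)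
    (hfg : Measurable fun u => min (f u) (g u)) :
    μ.withDensity (fun u => .ofReal (f u)) = μ.withDensity (fun u => .ofReal (min (f u) (g u)))
      + μ.withDensity (fun u => .ofReal (f u - min (f u) (g u))) := by
  rw [← withDensity_add_left hfg.ennreal_ofReal]
  refine withDensity_congr_ae ?_
  filter_upwards [hf0, hg0] with u hfu hgu
  rw [Pi.add_apply, ← ENNReal.ofReal_add (le_min hfu hgu) (sub_nonneg.2 (min_le_left _ _)),
    add_sub_cancel]

lemma measureReal_withDensity_ofReal_univ (hf : Integrable f μ) (hf0 : 0 ≤ᵐ[μ] f) :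
    (μ.withDensity fun u => .ofReal (f u)).real univ = ∫ u, f u ∂μ := by
  rw [measureReal_def, withDensity_apply _ MeasurableSet.univ, setLIntegral_univ,
    ← ofReal_integral_eq_lintegral_ofReal hf hf0, ENNReal.toReal_ofReal (integral_nonneg_of_ae hf0)]

lemma isProbabilityMeasure_withDensity_ofReal (hf : Integrable f μ) (hf0 : 0 ≤ᵐ[μ] f)
    (hf1 : ∫ u, f u ∂μ = 1) : IsProbabilityMeasure (μ.withDensity fun u => .ofReal (f u)) := by
  constructor
  rw [withDensity_apply _ MeasurableSet.univ, setLIntegral_univ,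
    ← ofReal_integral_eq_lintegral_ofReal hf hf0, hf1, ENNReal.ofReal_one]

lemma le_integral_of_ae_le [IsProbabilityMeasure μ] (hf : Integrable f μ) {c : ℝ}
    (hc : ∀ᵐ u ∂μ, c ≤ f u) : c ≤ ∫ u, f u ∂μ := by
  simpa using integral_mono_ae (integrable_const c) hf hc

lemma integral_abs_div_integral_sub_le [IsProbabilityMeasure μ] (hf : Integrable f μ)
    (hg : Integrable g μ) {ε K : ℝ} (hε : 0 < ε) (hfε : ∀ᵐ u ∂μ, ε ≤ f u)
    (hgε : ∀ᵐ u ∂μ, ε ≤ g u) (hfg : ∀ᵐ u ∂μ, |f u - g u| ≤ K) :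
    ∫ u, |f u / ∫ v, f v ∂μ - g u / ∫ v, g v ∂μ| ∂μ ≤ 2 * K / ε := by
  have hεf : ε ≤ ∫ v, f v ∂μ := le_integral_of_ae_le hf hfε
  have hεg : ε ≤ ∫ v, g v ∂μ := le_integral_of_ae_le hg hgε
  have hK : |∫ v, f v ∂μ - ∫ v, g v ∂μ| ≤ K := by
    rw [← integral_sub hf hg]
    simpa using norm_integral_le_of_norm_le_const (f := fun u => f u - g u) hfg
  have hg1 : ∫ u, g u / ∫ v, g v ∂μ ∂μ = 1 := by
    rw [integral_div, div_self (hε.trans_le hεg).ne']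
  calc ∫ u, |f u / ∫ v, f v ∂μ - g u / ∫ v, g v ∂μ| ∂μ
      ≤ ∫ u, K / ε * (1 + g u / ∫ v, g v ∂μ) ∂μ := by
        refine integral_mono_ae ((hf.div_const _).sub (hg.div_const _)).abs
          (((integrable_const 1).add (hg.div_const _)).const_mul _) ?_
        filter_upwards [hgε, hfg] with u hgu hfgu
        exact abs_div_sub_div_le hε hεf hεg (hε.le.trans hgu) hfgu hK
    _ = 2 * K / ε := by
        rw [integral_const_mul, integral_add (integrable_const 1) (hg.div_const _), hg1,
          integral_const, probReal_univ, one_smul]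
        ring

end Densities

theorem W1_BG_le {d : ℕ} {μ : Measure (Fin d → ℝ)} [IsProbabilityMeasure μ]
    {E : Set (Fin d → ℝ)} (hE : ∀ᵐ u ∂μ, u ∈ E) {D : ℝ} (hD0 : 0 ≤ D)
    (hD : ∀ x ∈ E, ∀ y ∈ E, l1dist x y ≤ D) {g h : (Fin d → ℝ) → ℝ}
    (hgm : Measurable g) (hhm : Measurable h) (hgi : Integrable g μ) (hhi : Integrable h μ)
    {ε K : ℝ} (hε : 0 < ε) (hgε : ∀ᵐ u ∂μ, ε ≤ g u) (hhε : ∀ᵐ u ∂μ, ε ≤ h u)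
    (hgh : ∀ᵐ u ∂μ, |g u - h u| ≤ K) :
    W1 (BG g μ) (BG h μ) ≤ 2 * K * D / ε := by
  have hg_pos : 0 < ∫ v, g v ∂μ := hε.trans_le (le_integral_of_ae_le hgi hgε)
  have hh_pos : 0 < ∫ v, h v ∂μ := hε.trans_le (le_integral_of_ae_le hhi hhε)
  set φ := fun u => g u / ∫ v, g v ∂μ
  set ψ := fun u => h u / ∫ v, h v ∂μ
  have hφi : Integrable φ μ := hgi.div_const _
  have hψi : Integrable ψ μ := hhi.div_const _
  have hφ0 : 0 ≤ᵐ[μ] φ := hgε.mono fun u hu => div_nonneg (hε.le.trans hu) hg_pos.le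
  have hψ0 : 0 ≤ᵐ[μ] ψ := hhε.mono fun u hu => div_nonneg (hε.le.trans hu) hh_pos.le
  have hmin : Measurable fun u => min (φ u) (ψ u) :=
    (hgm.div_const _).min (hhm.div_const _)
  set ν := μ.withDensity fun u => .ofReal (min (φ u) (ψ u))
  set P := μ.withDensity fun u => .ofReal (φ u - min (φ u) (ψ u))
  set Q := μ.withDensity fun u => .ofReal (ψ u - min (φ u) (ψ u))
  have hsplit_g : BG g μ = ν + P := withDensity_ofReal_eq_min_add hφ0 hψ0 hmin
  have hsplit_h : BG h μ = ν + Q := by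
    have := withDensity_ofReal_eq_min_add hψ0 hφ0 (μ := μ) (by simpa only [min_comm] using hmin)
    simp only [min_comm (ψ _)] at this
    exact this
  have : IsProbabilityMeasure (ν + P) := hsplit_g ▸ isProbabilityMeasure_withDensity_ofReal hφi
    hφ0 (by rw [integral_div, div_self hg_pos.ne'])
  have : IsProbabilityMeasure (ν + Q) := hsplit_h ▸ isProbabilityMeasure_withDensity_ofReal hψi
    hψ0 (by rw [integral_div, div_self hh_pos.ne'])
  rw [hsplit_g, hsplit_h]
  have : IsFiniteMeasure ν := isFiniteMeasure_of_le (ν + P) (Measure.le_add_right le_rfl)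
  have : IsFiniteMeasure P := isFiniteMeasure_of_le (ν + P) (Measure.le_add_left le_rfl)
  have : IsFiniteMeasure Q := isFiniteMeasure_of_le (ν + Q) (Measure.le_add_left le_rfl)
  have hEc : μ Eᶜ = 0 := ae_iff.1 hE
  have hφψ : ∫ u, (φ u - min (φ u) (ψ u)) ∂μ ≤ ∫ u, |φ u - ψ u| ∂μ :=
    integral_mono (hφi.sub (hφi.inf hψi)) (hφi.sub hψi).abs fun u =>
      (sub_le_sub_right (le_max_left _ _) _).trans (max_sub_min_eq_abs' _ _).le
  calc W1 (ν + P) (ν + Q) ≤ D * P.real univ :=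
        Wcost_add_le l1dist_nonneg continuous_l1dist.measurable l1dist_self hD ν P Q
          (withDensity_absolutelyContinuous μ _ hEc) (withDensity_absolutelyContinuous μ _ hEc)
    _ = D * ∫ u, (φ u - min (φ u) (ψ u)) ∂μ := by
        rw [measureReal_withDensity_ofReal_univ (f := fun u => φ u - min (φ u) (ψ u))
          (hφi.sub (hφi.inf hψi)) (ae_of_all _ fun u => sub_nonneg.2 (min_le_left _ _))]
    _ ≤ D * (2 * K / ε) := by
        gcongr
        exact hφψ.trans (integral_abs_div_integral_sub_le hgi hhi hε hgε hhε hgh)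
    _ = 2 * K * D / ε := by ring

theorem statement4_general {d : ℕ} (E : Set (Fin d → ℝ)) (hEc : IsCompact E)
    (μ : Measure (Fin d → ℝ)) [IsProbabilityMeasure μ] (hμE : μ E = 1)
    (G : (Fin d → ℝ) → (Fin d → ℝ) → ℝ) (hGmeas : Measurable (Function.uncurry G))
    (hGbdd : ∃ C, ∀ x ∈ E, ∀ y ∈ E, G x y ≤ C)
    (ε : ℝ) (hε : 0 < ε) (hGlb : ∀ x ∈ E, ∀ y ∈ E, ε ≤ G x y)
    (CG : ℝ) (hGLip : ∀ y ∈ E, ∀ x ∈ E, ∀ x' ∈ E, |G x y - G x' y| ≤ CG * l1dist x x')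
    (D : ℝ) (hD : ∀ x ∈ E, ∀ y ∈ E, l1dist x y ≤ D)
    (x y : Fin d → ℝ) (hx : x ∈ E) (hy : y ∈ E) :
    W1 (BG (G x) μ) (BG (G y) μ) ≤ 2 * CG * D / ε * l1dist x y := by
  obtain ⟨C, hC⟩ := hGbdd
  have hE : ∀ᵐ u ∂μ, u ∈ E :=
    mem_ae_iff.2 ((prob_compl_eq_zero_iff hEc.isClosed.measurableSet).2 hμE)
  have hGm (z : Fin d → ℝ) : Measurable (G z) := hGmeas.comp measurable_prodMk_left
  have hGε {z} (hz : z ∈ E) : ∀ᵐ u ∂μ, ε ≤ G z u := hE.mono fun u hu => hGlb z hz u hu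
  have hGi {z} (hz : z ∈ E) : Integrable (G z) μ :=
    Integrable.of_bound (hGm z).aestronglyMeasurable C <| hE.mono fun u hu => by
      rw [Real.norm_of_nonneg (hε.le.trans (hGlb z hz u hu))]
      exact hC z hz u hu
  calc W1 (BG (G x) μ) (BG (G y) μ) ≤ 2 * (CG * l1dist x y) * D / ε :=
        W1_BG_le hE (by simpa using hD x hx x hx) hD (hGm x) (hGm y) (hGi hx) (hGi hy) hε
          (hGε hx) (hGε hy) (hE.mono fun u hu => hGLip u hu x hx y hy)
    _ = 2 * CG * D / ε * l1dist x y := by ring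

/-- contraction estimate for the Boltzmann–Gibbs transformation in the point
variable: `W₁(Ψ_{G(x,·)}(μ), Ψ_{G(y,·)}(μ)) ≤ (2 ‖G‖_{Lip,∞} diam(E) / ε(G)) ‖x−y‖₁`.
Here `CG` is the constant `‖G‖_{Lip,∞}` and `D` the ℓ¹-diameter of `E`. -/
theorem statement4 {d : ℕ} (E : Set (Fin d → ℝ)) (hEc : IsCompact E) (hEconv : Convex ℝ E)
    (μ : Measure (Fin d → ℝ)) [IsProbabilityMeasure μ] (hμE : μ E = 1)
    (hμ1 : Integrable (fun x : Fin d → ℝ => x) μ)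
    (G : (Fin d → ℝ) → (Fin d → ℝ) → ℝ) (hGmeas : Measurable (Function.uncurry G))
    (hGbdd : ∃ C, ∀ x ∈ E, ∀ y ∈ E, G x y ≤ C)
    (ε : ℝ) (hε : 0 < ε) (hGlb : ∀ x ∈ E, ∀ y ∈ E, ε ≤ G x y)
    (CG : ℝ) (hGLip : ∀ y ∈ E, ∀ x ∈ E, ∀ x' ∈ E, |G x y - G x' y| ≤ CG * l1dist x x')
    (D : ℝ) (hD : ∀ x ∈ E, ∀ y ∈ E, l1dist x y ≤ D)
    (x y : Fin d → ℝ) (hx : x ∈ E) (hy : y ∈ E) :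
    W1 (BG (G x) μ) (BG (G y) μ) ≤ 2 * CG * D / ε * l1dist x y :=
  statement4_general E hEc μ hμE G hGmeas hGbdd ε hε hGlb CG hGLip D hD x y hx hy
end
end

section
/- For every n ≥ 1 and every (z_1, …, z_n) ∈ ℝ₊ⁿ: (Σ_{i=1}^n z_i e^{−z_i²}) / (1 + Σ_{i=1}^n e^{−z_i²}) ≤ √(ln n + 1/(2e)). -/
lemma tmax17 (t : ℝ) (ht : 0 ≤ t) :
    t * Real.exp (-t ^ 2) ≤ Real.exp (-(1 / 2)) / Real.sqrt 2 := by
  have h2 : (0:ℝ) < Real.sqrt 2 := by positivity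
  have h1 : t ^ 2 + 1 / 2 ≤ Real.exp (t ^ 2 - 1 / 2) := by
    have := Real.add_one_le_exp (t ^ 2 - 1 / 2); linarith
  have h3 : Real.sqrt 2 * t ≤ t ^ 2 + 1 / 2 := by
    nlinarith [sq_nonneg (t - Real.sqrt 2 / 2), Real.sq_sqrt (by norm_num : (0:ℝ) ≤ 2)]
  have h4 : Real.sqrt 2 * t ≤ Real.exp (t ^ 2 - 1 / 2) := h3.trans h1
  have h6 : Real.sqrt 2 * t * Real.exp (-t ^ 2) ≤ Real.exp (-(1 / 2)) := by
    calc Real.sqrt 2 * t * Real.exp (-t ^ 2)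
        ≤ Real.exp (t ^ 2 - 1 / 2) * Real.exp (-t ^ 2) :=
          mul_le_mul_of_nonneg_right h4 (Real.exp_pos _).le
      _ = Real.exp (-(1 / 2)) := by rw [← Real.exp_add]; ring_nf
  rw [le_div_iff₀ h2]
  calc t * Real.exp (-t ^ 2) * Real.sqrt 2
      = Real.sqrt 2 * t * Real.exp (-t ^ 2) := by ring
    _ ≤ Real.exp (-(1 / 2)) := h6

lemma pert17 (L x : ℝ) (hL : 0 ≤ L) (hx : 0 ≤ x) :
    (x - L) * Real.exp (-x ^ 2)
      ≤ Real.exp (-L ^ 2) * (Real.exp (-(1 / 2)) / Real.sqrt 2) := by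
  rcases le_or_gt x L with h | h
  · have h1 : (x - L) * Real.exp (-x ^ 2) ≤ 0 :=
      mul_nonpos_of_nonpos_of_nonneg (by linarith) (Real.exp_pos _).le
    exact h1.trans (by positivity)
  · set t := x - L with ht
    have ht0 : 0 < t := by simp only [ht]; linarith
    have hexp : Real.exp (-x ^ 2)
        = Real.exp (-L ^ 2) * Real.exp (-(2 * L * t)) * Real.exp (-t ^ 2) := by
      rw [← Real.exp_add, ← Real.exp_add]
      congr 1
      have : x = L + t := by simp [ht]
      rw [this]; ring
    rw [hexp]
    have hB : Real.exp (-(2 * L * t)) ≤ 1 := Real.exp_le_one_iff.mpr (by nlinarith)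
    have hC : t * Real.exp (-t ^ 2) ≤ Real.exp (-(1 / 2)) / Real.sqrt 2 :=
      tmax17 t ht0.le
    have hA : (0:ℝ) < Real.exp (-L ^ 2) := Real.exp_pos _
    have hCpos : (0:ℝ) < Real.exp (-t ^ 2) := Real.exp_pos _
    have hBpos : (0:ℝ) < Real.exp (-(2 * L * t)) := Real.exp_pos _
    calc t * (Real.exp (-L ^ 2) * Real.exp (-(2 * L * t)) * Real.exp (-t ^ 2))
        = (t * Real.exp (-t ^ 2)) * (Real.exp (-L ^ 2) * Real.exp (-(2 * L * t))) := by ring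
      _ ≤ (Real.exp (-(1 / 2)) / Real.sqrt 2) * (Real.exp (-L ^ 2) * Real.exp (-(2 * L * t))) :=
          mul_le_mul_of_nonneg_right hC (by positivity)
      _ ≤ (Real.exp (-(1 / 2)) / Real.sqrt 2) * (Real.exp (-L ^ 2) * 1) := by
          apply mul_le_mul_of_nonneg_left _ (by positivity)
          exact mul_le_mul_of_nonneg_left hB hA.le
      _ = Real.exp (-L ^ 2) * (Real.exp (-(1 / 2)) / Real.sqrt 2) := by ring

/-- for every `n ≥ 1` and nonnegative reals `z₁, …, z_n`,
`(Σ zᵢ e^{−zᵢ²}) / (1 + Σ e^{−zᵢ²}) ≤ √(ln n + 1/(2e))`. -/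
theorem statement17 (n : ℕ) (hn : 1 ≤ n) (z : Fin n → ℝ) (hz : ∀ i, 0 ≤ z i) :
    (∑ i, z i * Real.exp (-(z i) ^ 2)) / (1 + ∑ i, Real.exp (-(z i) ^ 2))
      ≤ Real.sqrt (Real.log n + 1 / (2 * Real.exp 1)) := by
  set L := Real.sqrt (Real.log n + 1 / (2 * Real.exp 1)) with hLdef
  have hn' : (1:ℝ) ≤ (n:ℝ) := by exact_mod_cast hn
  have hlog : 0 ≤ Real.log n := Real.log_nonneg hn'
  have he : (0:ℝ) < Real.exp 1 := Real.exp_pos 1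
  have hS0 : 0 ≤ Real.log n + 1 / (2 * Real.exp 1) := by positivity
  have hL0 : 0 ≤ L := Real.sqrt_nonneg _
  have hLsq : L ^ 2 = Real.log n + 1 / (2 * Real.exp 1) := Real.sq_sqrt hS0
  set c : ℝ := Real.exp (-(1 / 2)) / Real.sqrt 2 with hcdef
  have hc0 : 0 ≤ c := by positivity
  -- c = √(1/(2e))
  have hsq : c ^ 2 = 1 / (2 * Real.exp 1) := by
    rw [hcdef, div_pow, Real.sq_sqrt (by norm_num : (0:ℝ) ≤ 2), sq, ← Real.exp_add]
    norm_num [Real.exp_neg]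
    field_simp
  have hc : c = Real.sqrt (1 / (2 * Real.exp 1)) := by
    rw [← hsq, Real.sqrt_sq hc0]
  have hcL : c ≤ L := by
    rw [hc, hLdef]
    exact Real.sqrt_le_sqrt (by linarith)
  -- n * exp(-L²) ≤ 1
  have hnexp : (n:ℝ) * Real.exp (-L ^ 2) ≤ 1 := by
    rw [hLsq, neg_add, Real.exp_add, Real.exp_neg, Real.exp_log (by linarith : (0:ℝ) < (n:ℝ))]
    have h1 : Real.exp (-(1 / (2 * Real.exp 1))) ≤ 1 :=
      Real.exp_le_one_iff.mpr (neg_nonpos.mpr (by positivity))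
    calc (n:ℝ) * (((n:ℝ))⁻¹ * Real.exp (-(1 / (2 * Real.exp 1))))
        = Real.exp (-(1 / (2 * Real.exp 1))) := by
          field_simp
      _ ≤ 1 := h1
  have hden : (0:ℝ) < 1 + ∑ i, Real.exp (-(z i) ^ 2) := by positivity
  rw [div_le_iff₀ hden]
  have key : ∀ i : Fin n, z i * Real.exp (-(z i) ^ 2)
      ≤ L * Real.exp (-(z i) ^ 2) + Real.exp (-L ^ 2) * c := by
    intro i
    have := pert17 L (z i) hL0 (hz i)
    rw [← hcdef] at this
    nlinarith [this]
  calc ∑ i, z i * Real.exp (-(z i) ^ 2)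
      ≤ ∑ i, (L * Real.exp (-(z i) ^ 2) + Real.exp (-L ^ 2) * c) :=
        Finset.sum_le_sum fun i _ => key i
    _ = L * ∑ i, Real.exp (-(z i) ^ 2) + (n:ℝ) * (Real.exp (-L ^ 2) * c) := by
        rw [Finset.sum_add_distrib, ← Finset.mul_sum, Finset.sum_const,
          Finset.card_univ, Fintype.card_fin, nsmul_eq_mul]
    _ ≤ L * ∑ i, Real.exp (-(z i) ^ 2) + L := by
        have h1 : (n:ℝ) * (Real.exp (-L ^ 2) * c) ≤ 1 * c := by
          have := mul_le_mul_of_nonneg_right hnexp hc0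
          nlinarith
        linarith [hcL]
    _ = L * (1 + ∑ i, Real.exp (-(z i) ^ 2)) := by ring
end
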